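/- arXiv:2210.00462 — 4 statements merged into one kernel-verified Lean document; each statement's English description precedes it below -/
import Mathlib

section
/- Let π be a probability measure on ℝ^d, let k : ℝ^d × ℝ^d → ℝ be a bounded measurable symmetric kernel, and let λ > 0. Suppose the Stein log-Sobolev inequality holds: for every bounded, continuously differentiable function r : ℝ^d → [0, ∞) with bounded gradient and ∫ r dπ = 1 one has ∫ r log r dπ ≤ (1/(2λ)) ∬ k(x,y) ⟨∇r(x), ∇r(y)⟩ dπ(x) dπ(y) (convention 0·log 0 = 0). Then the Stein Poincaré inequality holds with the same constant: for every bounded, continuously differentiable function g : ℝ^d → ℝ with bounded gradient, ∫ g dπ = 0, and ∫ g² dπ < ∞, one has ∫ g² dπ ≤ (1/λ) ∬ k(x,y) ⟨∇g(x), ∇g(y)⟩ dπ(x) dπ(y). -/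
open MeasureTheory
open scoped RealInnerProductSpace

lemma steinAux_log_lb {t : ℝ} (ht : -1 < t) : t / (1 + t) ≤ Real.log (1 + t) := by
  have h0 : (0:ℝ) < 1 + t := by linarith
  have := Real.one_sub_inv_le_log_of_pos h0
  have hinv : 1 - (1 + t)⁻¹ = t / (1 + t) := by field_simp; ring
  linarith [hinv ▸ this]

lemma steinAux_pointwise_key {t : ℝ} (ht : |t| ≤ 1/2) :
    t + t^2/2 - t^2 * |t| ≤ (1 + t) * Real.log (1 + t) := by
  rcases abs_le.mp ht with ⟨h1, h2⟩
  rcases le_or_gt t 0 with h | h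
  · rw [abs_of_nonpos h]
    set f : ℝ → ℝ := fun s => (1 + s) * Real.log (1 + s) - s - s^2/2 with hf
    have hderiv : ∀ s ∈ Set.Icc (-(1:ℝ)/2) 0, HasDerivAt f (Real.log (1 + s) - s) s := by
      intro s hs
      have hs0 : (0:ℝ) < 1 + s := by have := hs.1; simp at this ⊢; linarith
      have hA : HasDerivAt (fun s : ℝ => 1 + s) 1 s := (hasDerivAt_id s).const_add 1
      have hlog : HasDerivAt (fun s : ℝ => Real.log (1 + s)) ((1+s)⁻¹ * 1) s :=
        (Real.hasDerivAt_log hs0.ne').comp s hA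
      have hmul := hA.mul hlog
      have hq : HasDerivAt (fun s : ℝ => s + s^2/2) (1 + (2 * s^1)/2) s :=
        (hasDerivAt_id s).add ((hasDerivAt_pow 2 s).div_const 2)
      have := hmul.sub hq
      refine (this.congr_deriv ?_).congr_of_eventuallyEq (Filter.Eventually.of_forall fun u => ?_)
      · rw [mul_one, mul_inv_cancel₀ hs0.ne']; ring
      · simp [hf]; ring
    have hanti : AntitoneOn f (Set.Icc (-(1:ℝ)/2) 0) := by
      apply antitoneOn_of_deriv_nonpos (convex_Icc _ _)
      · exact continuousOn_of_forall_continuousAt (fun s hs => (hderiv s hs).continuousAt)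
      · intro s hs
        have hs' : s ∈ Set.Icc (-(1:ℝ)/2) 0 := interior_subset hs
        exact (hderiv s hs').differentiableAt.differentiableWithinAt
      · intro s hs
        have hs' : s ∈ Set.Icc (-(1:ℝ)/2) 0 := interior_subset hs
        rw [(hderiv s hs').deriv]
        have hs0 : (0:ℝ) < 1 + s := by have := hs'.1; linarith
        have := Real.log_le_sub_one_of_pos hs0
        linarith
    have hle := hanti (Set.mem_Icc.mpr ⟨by linarith, h⟩) (Set.mem_Icc.mpr ⟨by norm_num, le_rfl⟩) h
    simp [hf] at hle
    nlinarith [sq_nonneg t, hle]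
  · rw [abs_of_pos h]
    set f : ℝ → ℝ := fun s => (1 + s) * Real.log (1 + s) - s - s^2/2 + s^2 * s with hf
    have hderiv : ∀ s ∈ Set.Icc (0:ℝ) (1/2), HasDerivAt f (Real.log (1 + s) - s + 3 * s^2) s := by
      intro s hs
      have hs0 : (0:ℝ) < 1 + s := by have := hs.1; linarith
      have hA : HasDerivAt (fun s : ℝ => 1 + s) 1 s := (hasDerivAt_id s).const_add 1
      have hlog : HasDerivAt (fun s : ℝ => Real.log (1 + s)) ((1+s)⁻¹ * 1) s :=
        (Real.hasDerivAt_log hs0.ne').comp s hA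
      have hmul := hA.mul hlog
      have hq : HasDerivAt (fun s : ℝ => s + s^2/2) (1 + (2 * s^1)/2) s :=
        (hasDerivAt_id s).add ((hasDerivAt_pow 2 s).div_const 2)
      have hcube : HasDerivAt (fun s : ℝ => s^3) (3 * s^2) s := by
        simpa using hasDerivAt_pow 3 s
      have := (hmul.sub hq).add hcube
      refine (this.congr_deriv ?_).congr_of_eventuallyEq (Filter.Eventually.of_forall fun u => ?_)
      · rw [mul_one, mul_inv_cancel₀ hs0.ne']; ring
      · simp [hf]; ring
    have hmono : MonotoneOn f (Set.Icc (0:ℝ) (1/2)) := by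
      apply monotoneOn_of_deriv_nonneg (convex_Icc _ _)
      · exact continuousOn_of_forall_continuousAt (fun s hs => (hderiv s hs).continuousAt)
      · intro s hs
        have hs' : s ∈ Set.Icc (0:ℝ) (1/2) := interior_subset hs
        exact (hderiv s hs').differentiableAt.differentiableWithinAt
      · intro s hs
        have hs' : s ∈ Set.Icc (0:ℝ) (1/2) := interior_subset hs
        rw [(hderiv s hs').deriv]
        have hs0 : (0:ℝ) ≤ s := hs'.1
        have hs1 : (0:ℝ) < 1 + s := by linarith
        have hlb : s / (1 + s) ≤ Real.log (1 + s) := steinAux_log_lb (by linarith)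
        have : s - s^2 ≤ s / (1 + s) := by
          rw [le_div_iff₀ hs1]; nlinarith
        nlinarith
    have hle := hmono (Set.mem_Icc.mpr ⟨le_rfl, by norm_num⟩) (Set.mem_Icc.mpr ⟨h.le, h2⟩) h.le
    simp [hf] at hle
    nlinarith [hle]

/-- the Stein log-Sobolev inequality implies the Stein Poincaré
inequality with the same constant. -/
theorem stein_logSobolev_implies_stein_poincare {d : ℕ}
    (π : Measure (EuclideanSpace ℝ (Fin d))) [IsProbabilityMeasure π]
    (k : EuclideanSpace ℝ (Fin d) × EuclideanSpace ℝ (Fin d) → ℝ)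
    (hk_meas : Measurable k)
    (hk_bdd : ∃ C, ∀ p, |k p| ≤ C)
    (hk_symm : ∀ x y, k (x, y) = k (y, x))
    (lam : ℝ) (hlam : 0 < lam)
    (hLSI : ∀ r : EuclideanSpace ℝ (Fin d) → ℝ,
      (∃ C, ∀ x, |r x| ≤ C) →
      ContDiff ℝ 1 r →
      (∃ C, ∀ x, ‖gradient r x‖ ≤ C) →
      (∀ x, 0 ≤ r x) →
      (∫ x, r x ∂π) = 1 →
      ∫ x, r x * Real.log (r x) ∂π ≤
        (1 / (2 * lam)) *
          ∫ x, ∫ y, k (x, y) * ⟪gradient r x, gradient r y⟫ ∂π ∂π) :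
    ∀ g : EuclideanSpace ℝ (Fin d) → ℝ,
      (∃ C, ∀ x, |g x| ≤ C) →
      ContDiff ℝ 1 g →
      (∃ C, ∀ x, ‖gradient g x‖ ≤ C) →
      (∫ x, g x ∂π) = 0 →
      Integrable (fun x => g x ^ 2) π →
      ∫ x, g x ^ 2 ∂π ≤
        (1 / lam) *
          ∫ x, ∫ y, k (x, y) * ⟪gradient g x, gradient g y⟫ ∂π ∂π := by
  intro g hg_bdd hg_smooth hg_grad_bdd hg_mean hg_sq_int
  obtain ⟨C, hC⟩ := hg_bdd
  obtain ⟨Cg, hCg⟩ := hg_grad_bdd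
  set M : ℝ := max C 0 with hMdef
  have hM : ∀ x, |g x| ≤ M := fun x => (hC x).trans (le_max_left _ _)
  have hM0 : 0 ≤ M := le_max_right _ _
  have hg_cont : Continuous g := hg_smooth.continuous
  set I : ℝ := ∫ x, ∫ y, k (x, y) * ⟪gradient g x, gradient g y⟫ ∂π ∂π with hIdef
  set S : ℝ := ∫ x, g x ^ 2 ∂π with hSdef
  set J : ℝ := ∫ x, g x ^ 2 * |g x| ∂π with hJdef
  have hg_int : Integrable g π :=
    (integrable_const M).mono' hg_cont.aestronglyMeasurable
      (Filter.Eventually.of_forall (fun x => by simpa using hM x))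
  have habs3_int : Integrable (fun x => g x ^ 2 * |g x|) π := by
    refine (integrable_const (M ^ 2 * M)).mono'
      (((hg_cont.pow 2).mul hg_cont.abs).aestronglyMeasurable)
      (Filter.Eventually.of_forall (fun x => ?_))
    have h1 : g x ^ 2 ≤ M ^ 2 := by nlinarith [hM x, abs_nonneg (g x), sq_abs (g x)]
    have h2 : (0:ℝ) ≤ g x ^ 2 * |g x| := by positivity
    have := mul_le_mul h1 (hM x) (abs_nonneg _) (by positivity)
    simpa [abs_of_nonneg h2] using this
  have hJ0 : 0 ≤ J := integral_nonneg (fun x => by positivity)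
  have key : ∀ ε : ℝ, 0 < ε → ε * M ≤ 1/2 → S ≤ (1/lam) * I + 2 * ε * J := by
    intro ε hε hεM
    have htbd : ∀ x, |ε * g x| ≤ 1/2 := by
      intro x
      rw [abs_mul, abs_of_pos hε]
      calc ε * |g x| ≤ ε * M := by nlinarith [hM x]
        _ ≤ 1/2 := hεM
    have hr_half : ∀ x, (1:ℝ)/2 ≤ 1 + ε * g x := by
      intro x; have := abs_le.mp (htbd x); linarith [this.1]
    have hr_ub : ∀ x, 1 + ε * g x ≤ 2 := by
      intro x; have := abs_le.mp (htbd x); linarith [this.2]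
    have hgrad : ∀ x, gradient (fun x => 1 + ε * g x) x = ε • gradient g x := by
      intro x
      have hd : DifferentiableAt ℝ g x := (hg_smooth.differentiable one_ne_zero) x
      unfold gradient
      rw [fderiv_const_add, fderiv_const_mul hd, _root_.map_smul]
    have hLSIr := hLSI (fun x => 1 + ε * g x)
      ⟨2, fun x => by
        show |1 + ε * g x| ≤ 2
        exact abs_le.mpr ⟨by linarith [hr_half x], hr_ub x⟩⟩
      (contDiff_const.add (contDiff_const.mul hg_smooth))
      ⟨ε * Cg, fun x => by
        rw [hgrad x, norm_smul, Real.norm_eq_abs, abs_of_pos hε]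
        exact mul_le_mul_of_nonneg_left (hCg x) hε.le⟩
      (fun x => by show (0:ℝ) ≤ 1 + ε * g x; linarith [hr_half x])
      (by
        rw [integral_add (integrable_const 1) (hg_int.const_mul ε),
          integral_const, integral_const_mul, hg_mean]
        simp)
    have hRHS : (∫ x, ∫ y, k (x, y) *
        ⟪gradient (fun x => 1 + ε * g x) x, gradient (fun x => 1 + ε * g x) y⟫ ∂π ∂π)
        = ε ^ 2 * I := by
      have hpt : ∀ x y, k (x, y) *
          ⟪gradient (fun x => 1 + ε * g x) x, gradient (fun x => 1 + ε * g x) y⟫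
          = ε ^ 2 * (k (x, y) * ⟪gradient g x, gradient g y⟫) := by
        intro x y
        rw [hgrad x, hgrad y, real_inner_smul_left, real_inner_smul_right]
        ring
      simp_rw [hpt, integral_const_mul]
      rfl
    rw [hRHS] at hLSIr
    -- lower bound for the entropy integral
    have hrlog_int : Integrable (fun x => (1 + ε * g x) * Real.log (1 + ε * g x)) π := by
      have hrc : Continuous fun x => 1 + ε * g x :=
        continuous_const.add (continuous_const.mul hg_cont)
      refine (integrable_const (2:ℝ)).mono'
        (hrc.mul (hrc.log (fun x => by linarith [hr_half x]))).aestronglyMeasurable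
        (Filter.Eventually.of_forall (fun x => ?_))
      have hlogub : Real.log (1 + ε * g x) ≤ 1 := by
        have := Real.log_le_sub_one_of_pos (show (0:ℝ) < 1 + ε * g x by linarith [hr_half x])
        linarith [hr_ub x]
      have hloglb : -1 ≤ Real.log (1 + ε * g x) := by
        have hlb := steinAux_log_lb (show (-1:ℝ) < ε * g x by linarith [hr_half x])
        have h12 : (0:ℝ) < 1 + ε * g x := by linarith [hr_half x]
        have : (-1:ℝ) ≤ ε * g x / (1 + ε * g x) := by
          rw [le_div_iff₀ h12]; linarith [hr_half x]
        linarith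
      have h0 : (0:ℝ) < 1 + ε * g x := by linarith [hr_half x]
      rw [Real.norm_eq_abs, abs_mul]
      have : |Real.log (1 + ε * g x)| ≤ 1 := abs_le.mpr ⟨hloglb, hlogub⟩
      have h2' : |1 + ε * g x| ≤ 2 := abs_le.mpr ⟨by linarith [hr_half x], hr_ub x⟩
      calc |1 + ε * g x| * |Real.log (1 + ε * g x)| ≤ 2 * 1 :=
            mul_le_mul h2' this (abs_nonneg _) (by norm_num)
        _ = 2 := by norm_num
    have hlow_int : Integrable
        (fun x => ε * g x + ε ^ 2 / 2 * g x ^ 2 - ε ^ 3 * (g x ^ 2 * |g x|)) π :=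
      ((hg_int.const_mul ε).add (hg_sq_int.const_mul (ε ^ 2 / 2))).sub
        (habs3_int.const_mul (ε ^ 3))
    have hptlow : ∀ x, ε * g x + ε ^ 2 / 2 * g x ^ 2 - ε ^ 3 * (g x ^ 2 * |g x|)
        ≤ (1 + ε * g x) * Real.log (1 + ε * g x) := by
      intro x
      have := steinAux_pointwise_key (htbd x)
      have habs : |ε * g x| = ε * |g x| := by rw [abs_mul, abs_of_pos hε]
      have heq : ε * g x + (ε * g x) ^ 2 / 2 - (ε * g x) ^ 2 * |ε * g x|
          = ε * g x + ε ^ 2 / 2 * g x ^ 2 - ε ^ 3 * (g x ^ 2 * |g x|) := by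
        rw [habs]; ring
      linarith [heq ▸ this]
    have hmono := integral_mono hlow_int hrlog_int hptlow
    have hlowval : (∫ x, ε * g x + ε ^ 2 / 2 * g x ^ 2 - ε ^ 3 * (g x ^ 2 * |g x|) ∂π)
        = ε ^ 2 / 2 * S - ε ^ 3 * J := by
      have h1 : Integrable (fun x => ε * g x) π := hg_int.const_mul ε
      have h2 : Integrable (fun x => ε ^ 2 / 2 * g x ^ 2) π := hg_sq_int.const_mul _
      have h12 : Integrable (fun x => ε * g x + ε ^ 2 / 2 * g x ^ 2) π := h1.add h2
      rw [integral_sub h12 (habs3_int.const_mul (ε ^ 3)), integral_add h1 h2,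
        integral_const_mul, integral_const_mul, integral_const_mul, hg_mean]
      ring
    rw [hlowval] at hmono
    -- combine
    have hchain : ε ^ 2 / 2 * S - ε ^ 3 * J ≤ 1 / (2 * lam) * (ε ^ 2 * I) :=
      hmono.trans hLSIr
    have hε2 : (0:ℝ) < ε ^ 2 := by positivity
    have heq2 : 1 / (2 * lam) * (ε ^ 2 * I) = ε ^ 2 * (1 / lam * I) / 2 := by
      rw [mul_comm 2 lam, ← div_div]; ring
    rw [heq2] at hchain
    have hfin : ε ^ 2 * S ≤ ε ^ 2 * ((1/lam) * I + 2 * ε * J) := by nlinarith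
    exact le_of_mul_le_mul_left (by linarith [hfin]) hε2
  -- take ε → 0
  refine le_of_forall_pos_le_add (fun δ hδ => ?_)
  set ε : ℝ := min (1 / (2 * (M + 1))) (δ / (2 * (J + 1))) with hεdef
  have hε0 : 0 < ε := lt_min (by positivity) (by positivity)
  have hεM : ε * M ≤ 1/2 := by
    have h1 : ε ≤ 1 / (2 * (M + 1)) := min_le_left _ _
    have h2 : ε * M ≤ 1 / (2 * (M + 1)) * M := mul_le_mul_of_nonneg_right h1 hM0
    have h3 : 1 / (2 * (M + 1)) * M ≤ 1/2 := by
      rw [div_mul_eq_mul_div, div_le_div_iff₀ (by positivity) (by norm_num)]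
      nlinarith
    linarith
  have hkey := key ε hε0 hεM
  have hεJ : 2 * ε * J ≤ δ := by
    have h1 : ε ≤ δ / (2 * (J + 1)) := min_le_right _ _
    have h2 : 2 * ε * J ≤ 2 * (δ / (2 * (J + 1))) * J := by nlinarith
    have h3 : 2 * (δ / (2 * (J + 1))) * J ≤ δ := by
      have hp : (0:ℝ) < 2 * (J + 1) := by positivity
      have hc : δ / (2 * (J + 1)) * (2 * (J + 1)) = δ := div_mul_cancel₀ δ hp.ne'
      nlinarith [div_nonneg hδ.le hp.le]
    linarith
  linarith
end

section
/- Let B be a real d × d matrix and let ε ≥ 0 satisfy 6·ε·‖B‖_F ≤ 1, where ‖B‖_F is the Frobenius norm. Then the matrix I + εB is invertible and log|det(I + εB)| ≥ ε·tr(B) − 5·ε²·‖B‖_F². -/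
/-- The Frobenius norm of a real square matrix. -/
noncomputable def matFrobeniusNorm {d : ℕ} (A : Matrix (Fin d) (Fin d) ℝ) : ℝ :=
  Real.sqrt (∑ i, ∑ j, A i j ^ 2)

attribute [local instance] Matrix.frobeniusNormedAddCommGroup Matrix.frobeniusNormedRing
attribute [local instance] Matrix.frobeniusIsBoundedSMul Matrix.frobeniusNormSMulClass
open Matrix

private lemma matFrobeniusNorm_eq_norm {d : ℕ} (A : Matrix (Fin d) (Fin d) ℝ) :
    matFrobeniusNorm A = ‖A‖ := by
  rw [matFrobeniusNorm, Matrix.frobenius_norm_def, Real.sqrt_eq_rpow]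
  congr 1
  refine Finset.sum_congr rfl fun i _ => Finset.sum_congr rfl fun j _ => ?_
  rw [Real.rpow_two, Real.norm_eq_abs, sq_abs]

private lemma frob_norm_sq_eq {d : ℕ} (A : Matrix (Fin d) (Fin d) ℝ) :
    ‖A‖ ^ 2 = ∑ i, ∑ j, A i j ^ 2 := by
  rw [← matFrobeniusNorm_eq_norm, matFrobeniusNorm, Real.sq_sqrt]
  exact Finset.sum_nonneg fun i _ => Finset.sum_nonneg fun j _ => sq_nonneg _

private lemma trace_mul_transpose_self {d : ℕ} (A : Matrix (Fin d) (Fin d) ℝ) :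
    (A * Aᵀ).trace = ‖A‖ ^ 2 := by
  rw [frob_norm_sq_eq]
  simp [Matrix.trace, Matrix.mul_apply, Matrix.diag, sq]

private lemma ofReal_comp {d : ℕ} (f : Fin d → ℝ) : (RCLike.ofReal ∘ f : Fin d → ℝ) = f := by
  funext i; simp

private lemma herm_trace {d : ℕ} {M : Matrix (Fin d) (Fin d) ℝ} (hM : M.IsHermitian) :
    M.trace = ∑ i, hM.eigenvalues i := by
  conv_lhs => rw [hM.spectral_theorem]
  rw [ofReal_comp, Unitary.conjStarAlgAut_apply, Matrix.trace_mul_cycle,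
    Matrix.UnitaryGroup.star_mul_self hM.eigenvectorUnitary, one_mul, Matrix.trace_diagonal]

private lemma herm_mul_self {d : ℕ} {M : Matrix (Fin d) (Fin d) ℝ} (hM : M.IsHermitian) :
    M * M = (hM.eigenvectorUnitary : Matrix (Fin d) (Fin d) ℝ)
      * Matrix.diagonal (fun i => hM.eigenvalues i * hM.eigenvalues i)
      * star (hM.eigenvectorUnitary : Matrix (Fin d) (Fin d) ℝ) := by
  conv_lhs => rw [hM.spectral_theorem]
  rw [ofReal_comp, ← Matrix.diagonal_mul_diagonal]
  set U := (hM.eigenvectorUnitary : Matrix (Fin d) (Fin d) ℝ)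
  set D := Matrix.diagonal hM.eigenvalues
  calc U * D * star U * (U * D * star U)
      = U * D * (star U * U) * (D * star U) := by noncomm_ring
    _ = U * (D * D) * star U := by
        rw [Matrix.UnitaryGroup.star_mul_self hM.eigenvectorUnitary]; noncomm_ring

private lemma herm_trace_sq {d : ℕ} {M : Matrix (Fin d) (Fin d) ℝ} (hM : M.IsHermitian) :
    (M * M).trace = ∑ i, hM.eigenvalues i ^ 2 := by
  rw [herm_mul_self hM, Matrix.trace_mul_cycle,
    Matrix.UnitaryGroup.star_mul_self hM.eigenvectorUnitary, one_mul, Matrix.trace_diagonal]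
  simp [sq]

private lemma log_one_add_ge {x : ℝ} (hx : -(1/2) ≤ x) :
    x - 2 * x ^ 2 ≤ Real.log (1 + x) := by
  have h1 : (0:ℝ) < 1 + x := by linarith
  have h2 : (0:ℝ) < 1 - (x - 2 * x ^ 2) := by nlinarith [sq_nonneg x, sq_nonneg (x - 1)]
  have key : Real.exp (x - 2 * x ^ 2) ≤ 1 + x := by
    set t := x - 2 * x ^ 2 with ht
    have h3 : Real.exp t * (1 - t) ≤ 1 := by
      calc Real.exp t * (1 - t) ≤ Real.exp t * Real.exp (-t) := by
            apply mul_le_mul_of_nonneg_left (by linarith [Real.add_one_le_exp (-t)])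
              (Real.exp_pos _).le
        _ = 1 := by rw [← Real.exp_add]; simp
    have h4 : Real.exp t ≤ 1 / (1 - t) := by rw [le_div_iff₀ h2]; exact h3
    refine h4.trans ?_
    rw [div_le_iff₀ h2]
    nlinarith [mul_nonneg (sq_nonneg x) (by linarith : (0:ℝ) ≤ 1 + 2*x)]
  calc x - 2 * x ^ 2 = Real.log (Real.exp (x - 2 * x ^ 2)) := (Real.log_exp _).symm
    _ ≤ Real.log (1 + x) := Real.log_le_log (Real.exp_pos _) key

/-- the simple lower bound of the paper's matrix
log-determinant lemma (Lemma C.2). -/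
theorem logDet_lower_bound_simple {d : ℕ} (B : Matrix (Fin d) (Fin d) ℝ)
    (ε : ℝ) (hε : 0 ≤ ε) (h : 6 * ε * matFrobeniusNorm B ≤ 1) :
    IsUnit (1 + ε • B) ∧
    Real.log |(1 + ε • B).det| ≥ ε * B.trace - 5 * ε ^ 2 * matFrobeniusNorm B ^ 2 := by
  rw [matFrobeniusNorm_eq_norm] at h ⊢
  set A : Matrix (Fin d) (Fin d) ℝ := 1 + ε • B with hA
  obtain ⟨S, hSdef⟩ : ∃ S' : Matrix (Fin d) (Fin d) ℝ,
      S' = ε • (B + Bᵀ) + (ε^2) • (B * Bᵀ) := ⟨_, rfl⟩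
  have hAS : A * Aᵀ = 1 + S := by
    rw [hA, hSdef]
    simp [Matrix.transpose_add, Matrix.transpose_smul, Matrix.mul_add, Matrix.add_mul,
      Matrix.smul_mul, Matrix.mul_smul, smul_smul, sq, smul_add]
    abel
  have hM : (1 + S).IsHermitian := by
    rw [← hAS]; simpa using Matrix.isHermitian_mul_conjTranspose_self A
  set μ : Fin d → ℝ := hM.eigenvalues with hμ
  -- basic quantities
  set a : ℝ := ε * ‖B‖ with ha_def
  have ha0 : 0 ≤ a := mul_nonneg hε (norm_nonneg _)
  have ha : a ≤ 1/6 := by linarith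
  -- norm of S
  have hnormS : ‖S‖ ≤ 2*a + a^2 := by
    calc ‖S‖ ≤ ‖ε • (B + Bᵀ)‖ + ‖(ε^2) • (B * Bᵀ)‖ := by rw [hSdef]; exact norm_add_le _ _
      _ = ε * ‖B + Bᵀ‖ + ε^2 * ‖B * Bᵀ‖ := by
          rw [norm_smul, norm_smul, Real.norm_eq_abs, Real.norm_eq_abs,
            abs_of_nonneg hε, abs_of_nonneg (sq_nonneg ε)]
      _ ≤ ε * (‖B‖ + ‖B‖) + ε^2 * (‖B‖ * ‖B‖) := by
          gcongr
          · calc ‖B + Bᵀ‖ ≤ ‖B‖ + ‖Bᵀ‖ := norm_add_le _ _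
              _ = ‖B‖ + ‖B‖ := by rw [Matrix.frobenius_norm_transpose]
          · calc ‖B * Bᵀ‖ ≤ ‖B‖ * ‖Bᵀ‖ := Matrix.frobenius_norm_mul _ _
              _ = ‖B‖ * ‖B‖ := by rw [Matrix.frobenius_norm_transpose]
      _ = 2*a + a^2 := by ring
  -- S is symmetric, so trace of S*S is its Frobenius norm squared
  have hSsymm : Sᵀ = S := by
    rw [hSdef]
    simp [Matrix.transpose_add, Matrix.transpose_smul, Matrix.transpose_mul]
    abel
  have htrSS : (S * S).trace = ‖S‖^2 := by
    nth_rewrite 2 [← hSsymm]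
    exact trace_mul_transpose_self S
  have htrSS_le : (S * S).trace ≤ (2*a + a^2)^2 := by
    rw [htrSS]
    exact pow_le_pow_left₀ (norm_nonneg _) hnormS 2
  have hb0 : (0:ℝ) ≤ 2*a + a^2 := by positivity
  have hb : 2*a + a^2 ≤ 13/36 := by nlinarith
  have htrSS_small : (S * S).trace ≤ 1/4 := htrSS_le.trans (by nlinarith)
  have htrSS_le2 : (S * S).trace ≤ (11/2) * a^2 := by nlinarith [htrSS_le, hb0, ha, ha0, sq_nonneg a]
  -- trace of S
  have htrS : S.trace = 2 * ε * B.trace + ε^2 * ‖B‖^2 := by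
    rw [hSdef]
    rw [Matrix.trace_add, Matrix.trace_smul, Matrix.trace_smul, Matrix.trace_add,
      Matrix.trace_transpose, ← trace_mul_transpose_self B]
    simp [smul_eq_mul]; ring
  -- eigenvalue sums
  have hsum_μ : ∑ i, μ i = (d:ℝ) + S.trace := by
    rw [← herm_trace hM, Matrix.trace_add, Matrix.trace_one]
    simp
  have hsum_μ2 : ∑ i, μ i ^ 2 = (d:ℝ) + 2 * S.trace + (S*S).trace := by
    rw [← herm_trace_sq hM]
    have hexp : (1 + S) * (1 + S) = 1 + (S + (S + S * S)) := by noncomm_ring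
    rw [hexp, Matrix.trace_add, Matrix.trace_add, Matrix.trace_add, Matrix.trace_one]
    rw [Fintype.card_fin]; push_cast; ring
  have hsum_lam : ∑ i, (μ i - 1) = S.trace := by
    rw [Finset.sum_sub_distrib, hsum_μ]; simp
  have hsum_lam2 : ∑ i, (μ i - 1) ^ 2 = (S*S).trace := by
    have : ∀ i : Fin d, (μ i - 1)^2 = μ i ^2 - 2 * μ i + 1 := fun i => by ring
    rw [Finset.sum_congr rfl fun i _ => this i]
    rw [Finset.sum_add_distrib, Finset.sum_sub_distrib, hsum_μ2, ← Finset.mul_sum, hsum_μ]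
    simp; ring
  -- each eigenvalue is at least 1/2
  have hlam_bound : ∀ i, -(1/2) ≤ μ i - 1 := by
    intro i
    have h1 : (μ i - 1)^2 ≤ (S*S).trace := by
      rw [← hsum_lam2]
      exact Finset.single_le_sum (fun j _ => sq_nonneg (μ j - 1)) (Finset.mem_univ i)
    nlinarith [sq_nonneg (μ i - 1 + 1/2)]
  have hμpos : ∀ i, 0 < μ i := fun i => by linarith [hlam_bound i]
  -- determinant
  have hdet_prod : (1 + S).det = ∏ i, μ i := by
    have := hM.det_eq_prod_eigenvalues
    simpa using this
  have hdet_pos : 0 < (1 + S).det := by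
    rw [hdet_prod]; exact Finset.prod_pos fun i _ => hμpos i
  have hdetA2 : A.det ^ 2 = (1 + S).det := by
    rw [← hAS, Matrix.det_mul, Matrix.det_transpose, sq]
  have hdetA_ne : A.det ≠ 0 := by
    intro h0
    rw [h0] at hdetA2
    simp at hdetA2
    linarith [hdet_pos, hdetA2]
  constructor
  · exact (Matrix.isUnit_iff_isUnit_det A).mpr (isUnit_iff_ne_zero.mpr hdetA_ne)
  -- the log-determinant bound
  have hlog : Real.log |A.det| = (1/2) * Real.log ((1 + S).det) := by
    rw [Real.log_abs, ← hdetA2, Real.log_pow]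
    push_cast; ring
  have hlogdet : Real.log ((1 + S).det) = ∑ i, Real.log (μ i) := by
    rw [hdet_prod, Real.log_prod fun i _ => (hμpos i).ne']
  have hsum_ge : S.trace - 2 * (S*S).trace ≤ ∑ i, Real.log (μ i) := by
    calc S.trace - 2 * (S*S).trace = ∑ i, ((μ i - 1) - 2 * (μ i - 1)^2) := by
          rw [Finset.sum_sub_distrib, ← Finset.mul_sum, hsum_lam, hsum_lam2]
      _ ≤ ∑ i, Real.log (μ i) := by
          refine Finset.sum_le_sum fun i _ => ?_
          have := log_one_add_ge (hlam_bound i)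
          simpa using this
  rw [hlog, hlogdet]
  have ha2 : a^2 = ε^2 * ‖B‖^2 := by rw [ha_def]; ring
  linarith [hsum_ge, htrSS_le2, htrS, ha2]
end

section
/- Let B be a real d × d matrix and let ε ≥ 0 satisfy 3·ε·‖B‖_F < 1, where ‖B‖_F is the Frobenius norm. Then the matrix I + εB is invertible and log|det(I + εB)| ≥ ε·tr(B) − (ε²/4)·( 9‖B‖_F²/(1 − 3ε‖B‖_F) + 2‖B‖_F² ). -/
namespace LogDetAux

open Matrix Finset

/-! ### Scalar lemmas -/

lemma neg_log_one_sub_le {t : ℝ} (h0 : 0 ≤ t) (h1 : t < 1) :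
    -Real.log (1 - t) ≤ t + t ^ 2 / (2 * (1 - t)) := by
  have habs : |t| < 1 := by rw [abs_of_nonneg h0]; exact h1
  have h1' := Real.hasSum_pow_div_log_of_abs_lt_one habs
  have htail : HasSum (fun n : ℕ => t ^ (n + 1 + 1) / ((n:ℝ) + 1 + 1))
      (-Real.log (1 - t) - ∑ i ∈ range 1, t ^ (i + 1) / (i + 1)) := by
    have := (hasSum_nat_add_iff' (f := fun n : ℕ => t ^ (n + 1) / (n + 1)) 1).2 h1'
    convert this using 2 with n
    · rfl
    · push_cast; ring
  have hgeo : HasSum (fun n : ℕ => t ^ 2 / 2 * t ^ n) (t ^ 2 / 2 * (1 - t)⁻¹) :=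
    (hasSum_geometric_of_lt_one h0 h1).mul_left _
  have hle : -Real.log (1 - t) - ∑ i ∈ range 1, t ^ (i + 1) / (i + 1)
      ≤ t ^ 2 / 2 * (1 - t)⁻¹ := by
    refine hasSum_le (fun n => ?_) htail hgeo
    have hp : (0:ℝ) ≤ t ^ (n + 2) := pow_nonneg h0 _
    have h2 : (2:ℝ) ≤ (n:ℝ) + 1 + 1 := by linarith [Nat.cast_nonneg (α := ℝ) n]
    calc t ^ (n + 1 + 1) / ((n:ℝ) + 1 + 1) ≤ t ^ (n + 2) / 2 :=
          div_le_div_of_nonneg_left hp (by norm_num) h2 |>.trans_eq (by norm_num)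
      _ = t ^ 2 / 2 * t ^ n := by ring
  simp only [range_one, Finset.sum_singleton, pow_one] at hle
  have ht1 : (0:ℝ) < 1 - t := by linarith
  have heq : t ^ 2 / 2 * (1 - t)⁻¹ = t ^ 2 / (2 * (1 - t)) := by
    field_simp
  norm_num at hle
  linarith [heq ▸ hle]

lemma log_one_add_ge_of_nonneg {x : ℝ} (hx : 0 ≤ x) :
    x - x ^ 2 / 2 ≤ Real.log (1 + x) := by
  have h1x : (0:ℝ) < 1 + x := by linarith
  set u := x / (1 + x) with hu
  have hu0 : 0 ≤ u := div_nonneg hx h1x.le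
  have hu1 : u < 1 := by
    rw [hu, div_lt_one h1x]; linarith
  have habs : |u| < 1 := by rw [abs_of_nonneg hu0]; exact hu1
  have hsum := Real.hasSum_pow_div_log_of_abs_lt_one habs
  have hlow : ∑ i ∈ Finset.range 2, u ^ (i + 1) / ((i:ℝ) + 1) ≤ -Real.log (1 - u) := by
    refine sum_le_hasSum _ (fun n _ => ?_) hsum
    positivity
  have h1u : 1 - u = 1 / (1 + x) := by
    rw [hu]; field_simp; ring
  have hlog : -Real.log (1 - u) = Real.log (1 + x) := by
    rw [h1u, one_div, Real.log_inv, neg_neg]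
  rw [hlog] at hlow
  have hexp : ∑ i ∈ Finset.range 2, u ^ (i + 1) / ((i:ℝ) + 1) = u + u ^ 2 / 2 := by
    simp [Finset.sum_range_succ]; norm_num
  rw [hexp] at hlow
  refine le_trans ?_ hlow
  have key : x / (1 + x) + (x ^ 2 / (1 + x) ^ 2) / 2 - (x - x ^ 2 / 2)
      = x ^ 4 / (2 * (1 + x) ^ 2) := by
    field_simp
    ring
  have hge : x / (1 + x) + x ^ 2 / (1 + x) ^ 2 / 2 - (x - x ^ 2 / 2) ≥ 0 := by
    rw [key]; positivity
  have h2 : u ^ 2 = x ^ 2 / (1 + x) ^ 2 := by rw [hu, div_pow]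
  linarith [hge, h2, hu]

lemma log_one_add_ge {x : ℝ} (hx : |x| < 1) :
    x - x ^ 2 / (2 * (1 - |x|)) ≤ Real.log (1 + x) := by
  rcases le_or_gt 0 x with h0 | h0
  · rw [abs_of_nonneg h0] at hx ⊢
    have h1 : 0 < 1 - x := by linarith
    have : x ^ 2 / 2 ≤ x ^ 2 / (2 * (1 - x)) := by
      apply div_le_div_of_nonneg_left (sq_nonneg x) (by linarith)
      nlinarith
    linarith [log_one_add_ge_of_nonneg h0]
  · rw [abs_of_neg h0] at hx ⊢
    have h0' : 0 ≤ -x := by linarith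
    have h1' : -x < 1 := by linarith
    have := neg_log_one_sub_le h0' h1'
    have hrw : 1 - -x = 1 + x := by ring
    rw [hrw] at this
    ring_nf at this ⊢
    linarith [this]

/-! ### Frobenius norm lemmas -/

attribute [local instance] Matrix.frobeniusNormedAddCommGroup Matrix.frobeniusNormedRing
  Matrix.frobeniusNormedSpace

lemma matF_eq_norm {d : ℕ} (A : Matrix (Fin d) (Fin d) ℝ) : matFrobeniusNorm A = ‖A‖ := by
  rw [Matrix.frobenius_norm_def, matFrobeniusNorm, Real.sqrt_eq_rpow]
  congr 1
  refine Finset.sum_congr rfl fun i _ => Finset.sum_congr rfl fun j _ => ?_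
  rw [Real.norm_eq_abs, show ((2:ℝ)) = ((2:ℕ):ℝ) by norm_num, Real.rpow_natCast, sq_abs]

lemma matF_nonneg {d : ℕ} (A : Matrix (Fin d) (Fin d) ℝ) : 0 ≤ matFrobeniusNorm A :=
  Real.sqrt_nonneg _

lemma matF_sq {d : ℕ} (A : Matrix (Fin d) (Fin d) ℝ) :
    matFrobeniusNorm A ^ 2 = ∑ i, ∑ j, A i j ^ 2 :=
  Real.sq_sqrt (by positivity)

lemma trace_mul_transpose {d : ℕ} (A : Matrix (Fin d) (Fin d) ℝ) :
    (A * Aᵀ).trace = matFrobeniusNorm A ^ 2 := by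
  rw [matF_sq, Matrix.trace]
  refine Finset.sum_congr rfl fun i _ => ?_
  simp [Matrix.mul_apply, Matrix.diag, sq]

lemma matF_M_le {d : ℕ} (B : Matrix (Fin d) (Fin d) ℝ) (ε : ℝ) (hε : 0 ≤ ε)
    (h1 : ε * matFrobeniusNorm B ≤ 1) :
    matFrobeniusNorm (B + Bᵀ + ε • (B * Bᵀ)) ≤ 3 * matFrobeniusNorm B := by
  simp only [matF_eq_norm]
  have h2 : ‖B + Bᵀ + ε • (B * Bᵀ)‖ ≤ ‖B‖ + ‖Bᵀ‖ + ‖ε • (B * Bᵀ)‖ :=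
    (norm_add_le _ _).trans (by gcongr; exact norm_add_le _ _)
  have h3 : ‖ε • (B * Bᵀ)‖ = ε * ‖B * Bᵀ‖ := by
    rw [norm_smul, Real.norm_eq_abs, abs_of_nonneg hε]
  have h4 : ‖B * Bᵀ‖ ≤ ‖B‖ * ‖Bᵀ‖ := norm_mul_le _ _
  have h5 : ‖Bᵀ‖ = ‖B‖ := Matrix.frobenius_norm_transpose B
  have hB0 : 0 ≤ ‖B‖ := norm_nonneg _
  rw [h5] at h2 h4
  have h6 : ε * ‖B * Bᵀ‖ ≤ ‖B‖ := by
    calc ε * ‖B * Bᵀ‖ ≤ ε * (‖B‖ * ‖B‖) := by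
          apply mul_le_mul_of_nonneg_left h4 hε
      _ = (ε * ‖B‖) * ‖B‖ := by ring
      _ ≤ 1 * ‖B‖ := by
          apply mul_le_mul_of_nonneg_right _ hB0
          rw [matF_eq_norm] at h1; exact h1
      _ = ‖B‖ := one_mul _
  linarith [h2, h3 ▸ h6]

end LogDetAux

open LogDetAux Matrix Finset in
/-- the refined lower bound of the paper's matrix
log-determinant lemma (Lemma C.2). -/
theorem logDet_lower_bound_refined {d : ℕ} (B : Matrix (Fin d) (Fin d) ℝ)
    (ε : ℝ) (hε : 0 ≤ ε) (h : 3 * ε * matFrobeniusNorm B < 1) :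
    IsUnit (1 + ε • B) ∧
    Real.log |(1 + ε • B).det| ≥ ε * B.trace -
      ε ^ 2 / 4 * (9 * matFrobeniusNorm B ^ 2 / (1 - 3 * ε * matFrobeniusNorm B) +
        2 * matFrobeniusNorm B ^ 2) := by
  set f := matFrobeniusNorm B with hf
  have hf0 : 0 ≤ f := matF_nonneg B
  have hεf : 0 ≤ 3 * ε * f := by positivity
  have hc : 0 < 1 - 3 * ε * f := by linarith
  -- the symmetrized matrix
  set M : Matrix (Fin d) (Fin d) ℝ := B + Bᵀ + ε • (B * Bᵀ) with hMdef
  have hMt : Mᵀ = M := by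
    rw [hMdef]
    simp only [Matrix.transpose_add, Matrix.transpose_smul, Matrix.transpose_mul,
      Matrix.transpose_transpose]
    rw [add_comm Bᵀ B]
  have hM : M.IsHermitian := by
    rw [Matrix.IsHermitian, Matrix.conjTranspose_eq_transpose_of_trivial, hMt]
  have hS : (1 + ε • B) * (1 + ε • B)ᵀ = 1 + ε • M := by
    rw [hMdef]
    simp only [Matrix.transpose_add, Matrix.transpose_one, Matrix.transpose_smul,
      mul_add, add_mul, mul_one, one_mul, Matrix.mul_smul, Matrix.smul_mul, smul_add, smul_smul]
    abel
  -- spectral data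
  set l := hM.eigenvalues with hl
  set V : Matrix (Fin d) (Fin d) ℝ :=
    (Matrix.IsHermitian.eigenvectorUnitary hM : Matrix (Fin d) (Fin d) ℝ) with hV
  have hV1 : V * star V = 1 :=
    Matrix.mem_unitaryGroup_iff.mp (Matrix.IsHermitian.eigenvectorUnitary hM).2
  have hdiag : star V * M * V = Matrix.diagonal l := by
    have := hM.conjStarAlgAut_star_eigenvectorUnitary
    simpa [RCLike.ofReal_real_eq_id, Unitary.conjStarAlgAut_star_apply] using this
  have hspec : M = V * Matrix.diagonal l * star V := by
    have := hM.spectral_theorem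
    simpa [RCLike.ofReal_real_eq_id, Unitary.conjStarAlgAut_apply] using this
  have htrconj : ∀ X : Matrix (Fin d) (Fin d) ℝ, (star V * X * V).trace = X.trace := by
    intro X
    rw [Matrix.trace_mul_comm, ← mul_assoc, hV1, one_mul]
  have htr : ∑ i, l i = M.trace := by
    calc ∑ i, l i = (Matrix.diagonal l).trace := (Matrix.trace_diagonal _).symm
      _ = (star V * M * V).trace := by rw [hdiag]
      _ = M.trace := htrconj M
  have htr2 : ∑ i, l i ^ 2 = (M * M).trace := by
    have hd2 : Matrix.diagonal l * Matrix.diagonal l = star V * (M * M) * V := by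
      rw [← hdiag]
      calc (star V * M * V) * (star V * M * V)
          = star V * M * ((V * star V) * (M * V)) := by simp only [mul_assoc]
        _ = star V * (M * M) * V := by rw [hV1, one_mul]; simp only [mul_assoc]
    calc ∑ i, l i ^ 2 = (Matrix.diagonal (l * l)).trace := by
          rw [Matrix.trace_diagonal]
          exact Finset.sum_congr rfl fun i _ => pow_two (l i)
      _ = (Matrix.diagonal l * Matrix.diagonal l).trace := by
          rw [Matrix.diagonal_mul_diagonal]
          rfl
      _ = (star V * (M * M) * V).trace := by rw [hd2]
      _ = (M * M).trace := htrconj _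
  have hdet : (1 + ε • M).det = ∏ i, (1 + ε * l i) := by
    have hconj : 1 + ε • M = V * (1 + ε • Matrix.diagonal l) * star V := by
      rw [mul_add, add_mul, mul_one, hV1, Matrix.mul_smul, Matrix.smul_mul, ← hspec]
    have hdetV : V.det * (star V).det = 1 := by
      rw [← Matrix.det_mul, hV1, Matrix.det_one]
    rw [hconj, Matrix.det_mul, Matrix.det_mul]
    have h1 : (1 : Matrix (Fin d) (Fin d) ℝ) + ε • Matrix.diagonal l
        = Matrix.diagonal (fun i => 1 + ε * l i) := by
      ext i j
      simp only [Matrix.add_apply, Matrix.smul_apply, Matrix.diagonal_apply, Matrix.one_apply,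
        smul_eq_mul]
      split <;> simp
    rw [h1, Matrix.det_diagonal, mul_right_comm, hdetV, one_mul]
  -- norm bounds
  have hMF : matFrobeniusNorm M ≤ 3 * f := by
    rw [hMdef]
    exact matF_M_le B ε hε (by nlinarith)
  have hl2 : ∑ i, l i ^ 2 = matFrobeniusNorm M ^ 2 := by
    rw [htr2, show M * M = M * Mᵀ by rw [hMt], trace_mul_transpose]
  have hM2 : matFrobeniusNorm M ^ 2 ≤ 9 * f ^ 2 := by
    nlinarith [matF_nonneg M]
  have habs : ∀ i, |l i| ≤ 3 * f := by
    intro i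
    have h1 : l i ^ 2 ≤ ∑ j, l j ^ 2 :=
      Finset.single_le_sum (f := fun j => l j ^ 2) (fun j _ => sq_nonneg _) (Finset.mem_univ i)
    have h2 : l i ^ 2 ≤ (3 * f) ^ 2 := by
      rw [hl2] at h1; nlinarith
    calc |l i| = Real.sqrt (l i ^ 2) := (Real.sqrt_sq_eq_abs _).symm
      _ ≤ Real.sqrt ((3 * f) ^ 2) := Real.sqrt_le_sqrt h2
      _ = 3 * f := Real.sqrt_sq (by positivity)
  have hx : ∀ i, |ε * l i| ≤ 3 * ε * f := by
    intro i
    rw [abs_mul, abs_of_nonneg hε]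
    calc ε * |l i| ≤ ε * (3 * f) := mul_le_mul_of_nonneg_left (habs i) hε
      _ = 3 * ε * f := by ring
  have hxlt : ∀ i, |ε * l i| < 1 := fun i => lt_of_le_of_lt (hx i) h
  have hpos : ∀ i, 0 < 1 + ε * l i := by
    intro i
    have := abs_lt.mp (hxlt i)
    linarith [this.1]
  -- determinant nonzero
  have hAdet2 : (1 + ε • B).det ^ 2 = ∏ i, (1 + ε * l i) := by
    have h1 : (1 + ε • B).det ^ 2 = ((1 + ε • B) * (1 + ε • B)ᵀ).det := by
      rw [Matrix.det_mul, Matrix.det_transpose, sq]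
    rw [h1, hS, hdet]
  have hprodpos : 0 < ∏ i, (1 + ε * l i) := Finset.prod_pos fun i _ => hpos i
  have hdetne : (1 + ε • B).det ≠ 0 := by
    intro h0
    rw [h0] at hAdet2
    simp at hAdet2
    linarith [hAdet2 ▸ hprodpos]
  refine ⟨(Matrix.isUnit_iff_isUnit_det _).mpr (isUnit_iff_ne_zero.mpr hdetne), ?_⟩
  -- log computation
  have hlog : Real.log |(1 + ε • B).det| = (1/2) * ∑ i, Real.log (1 + ε * l i) := by
    have h2 : Real.log ((1 + ε • B).det ^ 2) = 2 * Real.log (1 + ε • B).det := by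
      rw [Real.log_pow]; push_cast; ring
    have h3 : Real.log ((1 + ε • B).det ^ 2) = ∑ i, Real.log (1 + ε * l i) := by
      rw [hAdet2]
      exact Real.log_prod fun i _ => (hpos i).ne'
    rw [Real.log_abs]
    linarith
  -- per-eigenvalue lower bound
  have hterm : ∀ i, ε * l i - (ε * l i) ^ 2 / (2 * (1 - 3 * ε * f))
      ≤ Real.log (1 + ε * l i) := by
    intro i
    have h4 := log_one_add_ge (hxlt i)
    have h5 : (ε * l i) ^ 2 / (2 * (1 - 3 * ε * f)) ≥ (ε * l i) ^ 2 / (2 * (1 - |ε * l i|)) := by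
      apply div_le_div_of_nonneg_left (sq_nonneg _) (by linarith)
      have := hx i
      linarith
    linarith
  have hsum : ∑ i, (ε * l i - (ε * l i) ^ 2 / (2 * (1 - 3 * ε * f)))
      ≤ ∑ i, Real.log (1 + ε * l i) := Finset.sum_le_sum fun i _ => hterm i
  have hsplit : ∑ i, (ε * l i - (ε * l i) ^ 2 / (2 * (1 - 3 * ε * f)))
      = ε * M.trace - ε ^ 2 / (2 * (1 - 3 * ε * f)) * matFrobeniusNorm M ^ 2 := by
    rw [Finset.sum_sub_distrib, ← Finset.mul_sum, htr]
    congr 1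
    rw [← hl2, Finset.mul_sum]
    exact Finset.sum_congr rfl fun i _ => by ring
  have htrM : M.trace = 2 * B.trace + ε * f ^ 2 := by
    rw [hMdef, Matrix.trace_add, Matrix.trace_add, Matrix.trace_smul, Matrix.trace_transpose,
      trace_mul_transpose, smul_eq_mul, hf]
    ring
  -- final arithmetic
  have hq : 0 ≤ ε ^ 2 / (2 * (1 - 3 * ε * f)) := by positivity
  have hstep : ε ^ 2 / (2 * (1 - 3 * ε * f)) * matFrobeniusNorm M ^ 2
      ≤ ε ^ 2 / (2 * (1 - 3 * ε * f)) * (9 * f ^ 2) := mul_le_mul_of_nonneg_left hM2 hq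
  have hEq : ε ^ 2 / 4 * (9 * f ^ 2 / (1 - 3 * ε * f) + 2 * f ^ 2)
      = ε ^ 2 / (2 * (1 - 3 * ε * f)) * (9 * f ^ 2) / 2 + ε ^ 2 * f ^ 2 / 2 := by
    field_simp
    ring
  have hff : 0 ≤ ε ^ 2 * f ^ 2 := by positivity
  rw [ge_iff_le, hlog]
  rw [hsplit] at hsum
  rw [htrM] at hsum
  linarith [hsum, hstep]
end

section
/- Let A be a real symmetric n × n matrix and let ε ≥ 0 satisfy ε·‖A‖_op < 1, where ‖A‖_op is the ℓ² operator norm (equal to the spectral radius for symmetric A). Then I + εA is positive definite and ε·tr(A) − (ε²/2)·‖A‖_F²/(1 − ε‖A‖_op) ≤ log det(I + εA) ≤ ε·tr(A) − (ε²/2)·‖A‖_F²/(1 + ε‖A‖_op), where ‖A‖_F is the Frobenius norm. -/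
set_option synthInstance.maxHeartbeats 1000000
set_option maxHeartbeats 1000000
open scoped Matrix


lemma scalar_upper (m : ℝ) (hm0 : 0 ≤ m) (hm1 : m < 1) :
    ∀ x ∈ Set.Icc (-m) m, Real.log (1 + x) ≤ x - x ^ 2 / (2 * (1 + m)) := by
  set g : ℝ → ℝ := fun x => x - x ^ 2 / (2 * (1 + m)) - Real.log (1 + x) with hg
  have h1m : (0:ℝ) < 1 + m := by linarith
  have hd : ∀ x : ℝ, x ∈ Set.Icc (-m) m →
      HasDerivAt g (x * (m - x) / ((1 + m) * (1 + x))) x := by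
    intro x hx
    have h1x : (0:ℝ) < 1 + x := by
      rcases hx with ⟨h1, h2⟩; linarith
    have h1 : HasDerivAt (fun x : ℝ => 1 + x) 1 x := by
      simpa using (hasDerivAt_id x).const_add 1
    have hlog : HasDerivAt (fun x : ℝ => Real.log (1 + x)) (1 / (1 + x)) x := by
      simpa using h1.log h1x.ne'
    have hpoly : HasDerivAt (fun x : ℝ => x - x ^ 2 / (2 * (1 + m)))
        (1 - 2 * x ^ 1 / (2 * (1 + m))) x :=
      (hasDerivAt_id x).sub ((hasDerivAt_pow 2 x).div_const _)
    have : HasDerivAt g _ x := hpoly.sub hlog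
    convert this using 1
    field_simp
    ring
  have hmono : MonotoneOn g (Set.Icc 0 m) := by
    apply monotoneOn_of_hasDerivWithinAt_nonneg (convex_Icc 0 m)
    · intro x hx
      exact (hd x ⟨by linarith [hx.1], hx.2⟩).continuousAt.continuousWithinAt
    · intro x hx
      rw [interior_Icc] at hx
      exact (hd x ⟨by linarith [hx.1], le_of_lt hx.2⟩).hasDerivWithinAt
    · intro x hx
      rw [interior_Icc] at hx
      have h1x : (0:ℝ) < 1 + x := by linarith [hx.1]
      have : 0 ≤ x * (m - x) := mul_nonneg hx.1.le (by linarith [hx.2])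
      positivity
  have hanti : AntitoneOn g (Set.Icc (-m) 0) := by
    apply antitoneOn_of_hasDerivWithinAt_nonpos (convex_Icc (-m) 0)
    · intro x hx
      exact (hd x ⟨hx.1, by linarith [hx.2]⟩).continuousAt.continuousWithinAt
    · intro x hx
      rw [interior_Icc] at hx
      exact (hd x ⟨le_of_lt hx.1, by linarith [hx.2]⟩).hasDerivWithinAt
    · intro x hx
      rw [interior_Icc] at hx
      have h1x : (0:ℝ) < 1 + x := by linarith [hx.1]
      have hnum : x * (m - x) ≤ 0 :=
        mul_nonpos_of_nonpos_of_nonneg hx.2.le (by linarith [hx.2])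
      exact div_nonpos_of_nonpos_of_nonneg hnum (by positivity)
  have hg0 : g 0 = 0 := by simp [hg]
  intro x hx
  have : 0 ≤ g x := by
    rcases le_or_gt 0 x with hx0 | hx0
    · have := hmono ⟨le_refl 0, hm0⟩ ⟨hx0, hx.2⟩ hx0
      linarith [hg0 ▸ this]
    · have := hanti ⟨hx.1, hx0.le⟩ ⟨neg_nonpos.mpr hm0, le_refl 0⟩ hx0.le
      linarith [hg0 ▸ this]
  simp only [hg] at this
  linarith

lemma scalar_lower (m : ℝ) (hm0 : 0 ≤ m) (hm1 : m < 1) :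
    ∀ x ∈ Set.Icc (-m) m, x - x ^ 2 / (2 * (1 - m)) ≤ Real.log (1 + x) := by
  set g : ℝ → ℝ := fun x => Real.log (1 + x) - x + x ^ 2 / (2 * (1 - m)) with hg
  have h1m : (0:ℝ) < 1 - m := by linarith
  have hd : ∀ x : ℝ, x ∈ Set.Icc (-m) m →
      HasDerivAt g (x * (x + m) / ((1 - m) * (1 + x))) x := by
    intro x hx
    have h1x : (0:ℝ) < 1 + x := by rcases hx with ⟨h1, h2⟩; linarith
    have h1 : HasDerivAt (fun x : ℝ => 1 + x) 1 x := by
      simpa using (hasDerivAt_id x).const_add 1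
    have hlog : HasDerivAt (fun x : ℝ => Real.log (1 + x)) (1 / (1 + x)) x := by
      simpa using h1.log h1x.ne'
    have hpoly : HasDerivAt (fun x : ℝ => x ^ 2 / (2 * (1 - m)))
        (2 * x ^ 1 / (2 * (1 - m))) x := (hasDerivAt_pow 2 x).div_const _
    have : HasDerivAt g _ x := (hlog.sub (hasDerivAt_id x)).add hpoly
    convert this using 1
    field_simp
    ring
  have hmono : MonotoneOn g (Set.Icc 0 m) := by
    apply monotoneOn_of_hasDerivWithinAt_nonneg (convex_Icc 0 m)
    · intro x hx
      exact (hd x ⟨by linarith [hx.1], hx.2⟩).continuousAt.continuousWithinAt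
    · intro x hx
      rw [interior_Icc] at hx
      exact (hd x ⟨by linarith [hx.1], le_of_lt hx.2⟩).hasDerivWithinAt
    · intro x hx
      rw [interior_Icc] at hx
      have h1x : (0:ℝ) < 1 + x := by linarith [hx.1]
      have : 0 ≤ x * (x + m) := mul_nonneg hx.1.le (by linarith [hx.1])
      positivity
  have hanti : AntitoneOn g (Set.Icc (-m) 0) := by
    apply antitoneOn_of_hasDerivWithinAt_nonpos (convex_Icc (-m) 0)
    · intro x hx
      exact (hd x ⟨hx.1, by linarith [hx.2]⟩).continuousAt.continuousWithinAt
    · intro x hx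
      rw [interior_Icc] at hx
      exact (hd x ⟨le_of_lt hx.1, by linarith [hx.2]⟩).hasDerivWithinAt
    · intro x hx
      rw [interior_Icc] at hx
      have h1x : (0:ℝ) < 1 + x := by linarith [hx.1]
      have hnum : x * (x + m) ≤ 0 :=
        mul_nonpos_of_nonpos_of_nonneg hx.2.le (by linarith [hx.1])
      -- note: x + m ≥ 0 from hx.1
      exact div_nonpos_of_nonpos_of_nonneg hnum (by positivity)
  have hg0 : g 0 = 0 := by simp [hg]
  intro x hx
  have : 0 ≤ g x := by
    rcases le_or_gt 0 x with hx0 | hx0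
    · have := hmono ⟨le_refl 0, hm0⟩ ⟨hx0, hx.2⟩ hx0
      linarith [hg0 ▸ this]
    · have := hanti ⟨hx.1, hx0.le⟩ ⟨neg_nonpos.mpr hm0, le_refl 0⟩ hx0.le
      linarith [hg0 ▸ this]
  simp only [hg] at this
  linarith


/-- The ℓ² operator norm of a real square matrix. -/
noncomputable def matOpNorm {d : ℕ} (A : Matrix (Fin d) (Fin d) ℝ) : ℝ :=
  ‖Matrix.toEuclideanCLM (𝕜 := ℝ) A‖

/-- two-sided log-determinant estimate for symmetric matrices. -/
theorem logDet_two_sided_symmetric {n : ℕ} (A : Matrix (Fin n) (Fin n) ℝ)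
    (hA : A.IsSymm) (ε : ℝ) (hε : 0 ≤ ε) (h : ε * matOpNorm A < 1) :
    (1 + ε • A).PosDef ∧
    ε * A.trace - ε ^ 2 / 2 * (matFrobeniusNorm A ^ 2 / (1 - ε * matOpNorm A)) ≤
      Real.log (1 + ε • A).det ∧
    Real.log (1 + ε • A).det ≤
      ε * A.trace - ε ^ 2 / 2 * (matFrobeniusNorm A ^ 2 / (1 + ε * matOpNorm A)) := by
  have h' : ε * ‖Matrix.toEuclideanCLM (𝕜 := ℝ) A‖ < 1 := h
  have hA' : A.IsHermitian := by
    rw [Matrix.IsHermitian, Matrix.conjTranspose_eq_transpose_of_trivial]; exact hA.eq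
  set μ := hA'.eigenvalues with hμ
  set U := (hA'.eigenvectorUnitary : Matrix (Fin n) (Fin n) ℝ) with hU
  have hspec : A = U * Matrix.diagonal μ * star U := by
    have := hA'.spectral_theorem
    simpa using this
  have hUU : U * star U = 1 := (Matrix.mem_unitaryGroup_iff).mp hA'.eigenvectorUnitary.2
  have hUU' : star U * U = 1 := (Matrix.mem_unitaryGroup_iff').mp hA'.eigenvectorUnitary.2
  set M := ‖Matrix.toEuclideanCLM (𝕜 := ℝ) A‖ with hM
  have hM0 : 0 ≤ M := norm_nonneg _
  -- eigenvalue bound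
  have hbound : ∀ i, |μ i| ≤ M := by
    intro i
    have hv := hA'.mulVec_eigenvectorBasis i
    have hnv : ‖hA'.eigenvectorBasis i‖ = 1 := hA'.eigenvectorBasis.orthonormal.1 i
    have happ : Matrix.toEuclideanCLM (𝕜 := ℝ) A (hA'.eigenvectorBasis i)
        = μ i • hA'.eigenvectorBasis i := by
      ext j
      exact congrFun hv j
    have := (Matrix.toEuclideanCLM (𝕜 := ℝ) A).le_opNorm (hA'.eigenvectorBasis i)
    rw [happ, norm_smul, hnv, mul_one, mul_one] at this
    simpa using this
  -- key conjugation identity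
  have hkey : (1 : Matrix (Fin n) (Fin n) ℝ) + ε • A
      = U * Matrix.diagonal (fun i => 1 + ε * μ i) * star U := by
    have hd : Matrix.diagonal (fun i => 1 + ε * μ i)
        = 1 + ε • Matrix.diagonal μ := by
      rw [← Matrix.diagonal_one, ← Matrix.diagonal_smul, ← Matrix.diagonal_add]
      rfl
    rw [hd, Matrix.mul_add, Matrix.add_mul, Matrix.mul_one, hUU,
      Matrix.mul_smul, Matrix.smul_mul, ← hspec]
  -- trace
  have htr : A.trace = ∑ i, μ i := by
    rw [hspec, Matrix.trace_mul_cycle, hUU', Matrix.one_mul, Matrix.trace_diagonal]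
  -- Frobenius
  have hfro : ∑ i, ∑ j, A i j ^ 2 = ∑ i, μ i ^ 2 := by
    have h1 : (A * A).trace = ∑ i, ∑ j, A i j ^ 2 := by
      rw [Matrix.trace]
      refine Finset.sum_congr rfl fun i _ => ?_
      rw [Matrix.diag_apply, Matrix.mul_apply]
      refine Finset.sum_congr rfl fun j _ => ?_
      rw [hA.apply i j]
      ring
    have e1 : ∀ X : Matrix (Fin n) (Fin n) ℝ,
        star U * (U * X) = X := by
      intro X; rw [← Matrix.mul_assoc, hUU', Matrix.one_mul]
    have h2 : (A * A).trace = ∑ i, μ i ^ 2 := by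
      conv_lhs => rw [hspec]
      rw [show (U * Matrix.diagonal μ * star U) * (U * Matrix.diagonal μ * star U)
          = U * (Matrix.diagonal μ * Matrix.diagonal μ) * star U by
        simp only [Matrix.mul_assoc]
        rw [e1 (Matrix.diagonal μ * star U)]]
      rw [Matrix.trace_mul_cycle, hUU', Matrix.one_mul,
        Matrix.diagonal_mul_diagonal, Matrix.trace_diagonal]
      exact Finset.sum_congr rfl fun i _ => (sq (μ i)).symm
    rw [← h1, h2]
  -- positivity of 1 + ε μ i
  have hm1 : ε * M < 1 := h
  have hposi : ∀ i, 0 < 1 + ε * μ i := by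
    intro i
    have h1 : |ε * μ i| ≤ ε * M := by
      rw [abs_mul, abs_of_nonneg hε]
      exact mul_le_mul_of_nonneg_left (hbound i) hε
    have := abs_le.mp h1
    linarith [this.1]
  -- determinant
  have hdet : (1 + ε • A).det = ∏ i, (1 + ε * μ i) := by
    rw [hkey, Matrix.det_mul, Matrix.det_mul, mul_right_comm,
      ← Matrix.det_mul, hUU, Matrix.det_one, one_mul, Matrix.det_diagonal]
  -- pos def
  have hPD : (1 + ε • A).PosDef := by
    rw [hkey, Matrix.posDef_iff_dotProduct_mulVec]
    have hDpd : (Matrix.diagonal (fun i => 1 + ε * μ i)).PosDef :=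
      Matrix.PosDef.diagonal hposi
    refine ⟨?_, ?_⟩
    · rw [Matrix.star_eq_conjTranspose]
      exact Matrix.isHermitian_mul_mul_conjTranspose U hDpd.1
    · intro x hx
      set y := Matrix.mulVec (star U) x with hy
      have hyne : y ≠ 0 := by
        intro h0
        apply hx
        have : U *ᵥ y = x := by
          rw [hy, Matrix.mulVec_mulVec, hUU, Matrix.one_mulVec]
        rw [← this, h0, Matrix.mulVec_zero]
      have hrw : star x ⬝ᵥ (U * Matrix.diagonal (fun i => 1 + ε * μ i) * star U) *ᵥ x
          = star y ⬝ᵥ (Matrix.diagonal (fun i => 1 + ε * μ i)) *ᵥ y := by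
        rw [← Matrix.mulVec_mulVec, ← Matrix.mulVec_mulVec, Matrix.dotProduct_mulVec (star x)]
        congr 1
        rw [hy, Matrix.star_mulVec, Matrix.star_eq_conjTranspose,
          Matrix.conjTranspose_conjTranspose]
      rw [hrw]
      exact (Matrix.posDef_iff_dotProduct_mulVec.mp hDpd).2 hyne
  -- assemble
  have hFsq : matFrobeniusNorm A ^ 2 = ∑ i, μ i ^ 2 := by
    rw [matFrobeniusNorm, Real.sq_sqrt (by positivity), hfro]
  have hOp : matOpNorm A = M := rfl
  have hlogdet : Real.log (1 + ε • A).det = ∑ i, Real.log (1 + ε * μ i) := by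
    rw [hdet, Real.log_prod (fun i _ => (hposi i).ne')]
  have hm0 : 0 ≤ ε * M := mul_nonneg hε hM0
  have h1p : (0:ℝ) < 1 + ε * M := by linarith
  have h1m : (0:ℝ) < 1 - ε * M := by linarith
  have hmem : ∀ i, ε * μ i ∈ Set.Icc (-(ε * M)) (ε * M) := by
    intro i
    have h1 : |ε * μ i| ≤ ε * M := by
      rw [abs_mul, abs_of_nonneg hε]
      exact mul_le_mul_of_nonneg_left (hbound i) hε
    exact abs_le.mp h1
  have hsum_up : ∑ i, (ε * μ i - (ε * μ i) ^ 2 / (2 * (1 + ε * M)))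
      = ε * A.trace - ε ^ 2 / 2 * ((∑ i, μ i ^ 2) / (1 + ε * M)) := by
    rw [Finset.sum_sub_distrib, htr, Finset.mul_sum]
    congr 1
    calc ∑ i, (ε * μ i) ^ 2 / (2 * (1 + ε * M))
        = ∑ i, ε ^ 2 / 2 * (μ i ^ 2 / (1 + ε * M)) := by
          refine Finset.sum_congr rfl fun i _ => ?_
          field_simp
      _ = ε ^ 2 / 2 * ((∑ i, μ i ^ 2) / (1 + ε * M)) := by
          rw [← Finset.mul_sum, Finset.sum_div]
  have hsum_lo : ∑ i, (ε * μ i - (ε * μ i) ^ 2 / (2 * (1 - ε * M)))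
      = ε * A.trace - ε ^ 2 / 2 * ((∑ i, μ i ^ 2) / (1 - ε * M)) := by
    rw [Finset.sum_sub_distrib, htr, Finset.mul_sum]
    congr 1
    calc ∑ i, (ε * μ i) ^ 2 / (2 * (1 - ε * M))
        = ∑ i, ε ^ 2 / 2 * (μ i ^ 2 / (1 - ε * M)) := by
          refine Finset.sum_congr rfl fun i _ => ?_
          field_simp
      _ = ε ^ 2 / 2 * ((∑ i, μ i ^ 2) / (1 - ε * M)) := by
          rw [← Finset.mul_sum, Finset.sum_div]
  refine ⟨hPD, ?_, ?_⟩
  · rw [hOp, hFsq, hlogdet, ← hsum_lo]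
    refine Finset.sum_le_sum fun i _ => ?_
    exact scalar_lower (ε * M) hm0 hm1 (ε * μ i) (hmem i)
  · rw [hOp, hFsq, hlogdet, ← hsum_up]
    refine Finset.sum_le_sum fun i _ => ?_
    exact scalar_upper (ε * M) hm0 hm1 (ε * μ i) (hmem i)
end
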